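/- If M = [[a,b],[c,d]] lies in the group generated by L_u = [[1,0],[u,1]] and R_v = [[1,v],[0,1]] for integers u, v ≥ 2, then v divides b, u divides c, and a ≡ d ≡ 1 (mod uv). -/

import Mathlib

abbrev SL2 := Matrix.SpecialLinearGroup (Fin 2) ℤ

/-- `L_u = [[1,0],[u,1]]`. -/
def Lmat (u : ℤ) : SL2 :=
  ⟨!![1, 0; u, 1], by simp [Matrix.det_fin_two_of]⟩

/-- `R_v = [[1,v],[0,1]]`. -/
def Rmat (v : ℤ) : SL2 :=
  ⟨!![1, v; 0, 1], by simp [Matrix.det_fin_two_of]⟩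

/-- The set `𝒢_{u,v}`. -/
def Gscr (u v : ℤ) : Set SL2 :=
  {M | ∃ n1 n2 n3 n4 : ℤ,
    (M : Matrix (Fin 2) (Fin 2) ℤ) = !![1 + u*v*n1, v*n2; u*n3, 1 + u*v*n4]}

/-- The group `G_{u,v}` generated by `L_u` and `R_v`. -/
def Guv (u v : ℤ) : Subgroup SL2 := Subgroup.closure {Lmat u, Rmat v}

/-- Alternating product `R^{a₀} L^{a₁} R^{a₂} ⋯` from a list of exponents
(the boolean records whether the next factor is a power of `R`). -/
def altProd (u v : ℤ) : Bool → List ℤ → SL2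
  | _, [] => 1
  | true, a :: l => (Rmat v) ^ a * altProd u v false l
  | false, a :: l => (Lmat u) ^ a * altProd u v true l

/-!
The congruence conditions cut out the set `𝒢_{u,v}`, a subgroup of `SL₂(ℤ)` containing
`L_u` and `R_v`, hence the whole group they generate. Closure under products comes from
`(1 + uv a₁)(1 + uv b₁) + (v a₂)(u b₃) = 1 + uv (a₁ + b₁ + uv a₁ b₁ + a₂ b₃)` and its analogues
for the other entries; closure under inverses holds because the inverse in `SL₂` is the
adjugate `[[d, -b], [-c, a]]`.
-/

namespace Gscr

variable {u v : ℤ}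

theorem one_mem : (1 : SL2) ∈ Gscr u v :=
  ⟨0, 0, 0, 0, by ext i j; fin_cases i <;> fin_cases j <;> simp⟩

theorem mul_mem {A B : SL2} (hA : A ∈ Gscr u v) (hB : B ∈ Gscr u v) : A * B ∈ Gscr u v := by
  obtain ⟨a₁, a₂, a₃, a₄, hA⟩ := hA
  obtain ⟨b₁, b₂, b₃, b₄, hB⟩ := hB
  refine ⟨a₁ + b₁ + u * v * a₁ * b₁ + a₂ * b₃, a₂ + b₂ + u * v * (a₁ * b₂ + a₂ * b₄),
    a₃ + b₃ + u * v * (a₃ * b₁ + a₄ * b₃), a₄ + b₄ + u * v * a₄ * b₄ + a₃ * b₂, ?_⟩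
  rw [Matrix.SpecialLinearGroup.coe_mul, hA, hB, Matrix.mul_fin_two]
  ext i j; fin_cases i <;> fin_cases j <;> simp <;> ring

theorem inv_mem {A : SL2} (hA : A ∈ Gscr u v) : A⁻¹ ∈ Gscr u v := by
  obtain ⟨a₁, a₂, a₃, a₄, hA⟩ := hA
  refine ⟨a₄, -a₂, -a₃, a₁, ?_⟩
  rw [Matrix.SpecialLinearGroup.coe_inv, hA, Matrix.adjugate_fin_two_of]
  ext i j; fin_cases i <;> fin_cases j <;> simp

variable (u v) in
def subgroup : Subgroup SL2 where
  carrier := Gscr u v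
  one_mem' := one_mem
  mul_mem' := mul_mem
  inv_mem' := inv_mem

theorem Lmat_mem : Lmat u ∈ Gscr u v :=
  ⟨0, 0, 1, 0, by ext i j; fin_cases i <;> fin_cases j <;> simp [Lmat]⟩

theorem Rmat_mem : Rmat v ∈ Gscr u v :=
  ⟨0, 1, 0, 0, by ext i j; fin_cases i <;> fin_cases j <;> simp [Rmat]⟩

end Gscr

theorem Guv_le_Gscr (u v : ℤ) : Guv u v ≤ Gscr.subgroup u v := by
  rw [Guv, Subgroup.closure_le]
  rintro _ (rfl | rfl)
  exacts [Gscr.Lmat_mem, Gscr.Rmat_mem]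

theorem mem_Guv_entries (u v : ℤ) (M : SL2) (hM : M ∈ Guv u v) :
    v ∣ (M : Matrix (Fin 2) (Fin 2) ℤ) 0 1 ∧
    u ∣ (M : Matrix (Fin 2) (Fin 2) ℤ) 1 0 ∧
    (M : Matrix (Fin 2) (Fin 2) ℤ) 0 0 ≡ 1 [ZMOD u * v] ∧
    (M : Matrix (Fin 2) (Fin 2) ℤ) 1 1 ≡ 1 [ZMOD u * v] := by
  obtain ⟨n₁, n₂, n₃, n₄, hM⟩ := Guv_le_Gscr u v hM
  rw [hM]
  exact ⟨dvd_mul_right v n₂, dvd_mul_right u n₃, Int.add_mul_emod_self_left 1 (u * v) n₁,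
    Int.add_mul_emod_self_left 1 (u * v) n₄⟩
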